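/- Integral formula upper bound for IT density: for any density f on [0,1] with CDF F, k ≥ 3, and simplex point (u_1,...,u_k), (1/k)·Σ_{a=0}^{k-2} e_a(y_2,...,y_k)/C(k-1,a) ≤ ∫_0^1 ∏_{i=2}^k (1 - t·F(u_i)) dt − (1/k)·∏_{i=2}^k (1 - F(u_i)), where y_i = 1 - F(u_i). -/

import Mathlib

open Finset

lemma beta_nat (b : ℕ) : ∀ (a : ℕ), ∫ t in (0:ℝ)..1, t ^ a * (1 - t) ^ b
    = (a.factorial * b.factorial : ℝ) / (a + b + 1).factorial := by
  induction b with
  | zero =>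
      intro a
      simp only [pow_zero, mul_one, integral_pow, one_pow, Nat.factorial]
      have : ((a : ℝ) + 1) ≠ 0 := by positivity
      have hf : (a.factorial : ℝ) ≠ 0 := by positivity
      simp only [Nat.succ_eq_add_one, zero_pow (Nat.succ_ne_zero a)]
      push_cast
      field_simp
      norm_num
  | succ b ih =>
      intro a
      have hu : ∀ x ∈ Set.uIcc (0:ℝ) 1, HasDerivAt (fun t : ℝ => t ^ (a+1) / (a+1))
          (x ^ a) x := by
        intro x _
        have h := (hasDerivAt_pow (a+1) x).div_const ((a:ℝ)+1)
        refine h.congr_deriv ?_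
        have : ((a : ℝ) + 1) ≠ 0 := by positivity
        push_cast
        field_simp
      have hv : ∀ x ∈ Set.uIcc (0:ℝ) 1, HasDerivAt (fun t : ℝ => (1 - t) ^ (b+1))
          (-(((b:ℝ)+1) * (1 - x) ^ b)) x := by
        intro x _
        have h1 : HasDerivAt (fun t : ℝ => 1 - t) (-1) x := by
          simpa using (hasDerivAt_id x).const_sub 1
        have h := h1.pow (b+1)
        refine h.congr_deriv ?_
        push_cast
        ring
      have hint1 : IntervalIntegrable (fun x : ℝ => x ^ a) MeasureTheory.volume 0 1 :=
        (by continuity : Continuous fun x : ℝ => x ^ a).intervalIntegrable _ _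
      have hint2 : IntervalIntegrable (fun x : ℝ => -(((b:ℝ)+1) * (1 - x) ^ b))
          MeasureTheory.volume 0 1 :=
        (by continuity : Continuous fun x : ℝ => -(((b:ℝ)+1) * (1 - x) ^ b)).intervalIntegrable _ _
      have h := intervalIntegral.integral_mul_deriv_eq_deriv_mul hu hv hint1 hint2
      have hL : (∫ x in (0:ℝ)..1, x ^ (a+1) / (a+1) * (-(((b:ℝ)+1) * (1 - x) ^ b)))
          = (-(((b:ℝ)+1) / ((a:ℝ)+1))) * ∫ x in (0:ℝ)..1, x ^ (a+1) * (1 - x) ^ b := by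
        rw [← intervalIntegral.integral_const_mul]
        congr 1
        ext x
        field_simp
      have ha1 : ((a:ℝ)+1) ≠ 0 := by positivity
      have key : (∫ t in (0:ℝ)..1, t ^ a * (1 - t) ^ (b+1))
          = (((b:ℝ)+1) / ((a:ℝ)+1)) * ∫ t in (0:ℝ)..1, t ^ (a+1) * (1 - t) ^ b := by
        rw [hL] at h
        simp only [one_pow, sub_self, zero_pow, Nat.succ_ne_zero, ne_eq, not_false_iff,
          zero_div, mul_zero, zero_mul, sub_zero, zero_sub] at h
        linarith [h]
      rw [key, ih (a+1)]
      have e1 : (a + 1 + b + 1) = (a + (b+1) + 1) := by omega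
      rw [e1]
      rw [Nat.factorial_succ a, Nat.factorial_succ b]
      have h2 : ((a + (b+1) + 1).factorial : ℝ) ≠ 0 := by positivity
      push_cast
      field_simp

/-- Integral-formula upper bound for the IT density: with `y_i = 1 - F(u_i)`,
`(1/k) Σ_{a=0}^{k-2} e_a(y_2,…,y_k)/C(k-1,a)
   ≤ ∫_0^1 ∏_{i=2}^k (1 - t F(u_i)) dt − (1/k) ∏_{i=2}^k (1 - F(u_i))`. -/
theorem it_density_integral_bound (k : ℕ) (hk : 3 ≤ k) (F : ℝ → ℝ)
    (u : Fin k → ℝ) (hu : ∀ i, 0 ≤ u i) (husum : ∑ i, u i = 1)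
    (hF : ∀ i, F (u i) ∈ Set.Icc (0 : ℝ) 1) :
    let i0 : Fin k := ⟨0, by omega⟩
    (1 / (k : ℝ)) * ∑ a ∈ Finset.range (k - 1),
        (∑ A ∈ Finset.powersetCard a (Finset.univ.erase i0), ∏ i ∈ A, (1 - F (u i))) /
          (Nat.choose (k - 1) a : ℝ) ≤
      (∫ t in (0 : ℝ)..1, ∏ i ∈ Finset.univ.erase i0, (1 - t * F (u i))) -
        (1 / (k : ℝ)) * ∏ i ∈ Finset.univ.erase i0, (1 - F (u i)) := by
  intro i0
  set s : Finset (Fin k) := Finset.univ.erase i0 with hs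
  have hn : s.card = k - 1 := by
    rw [hs, Finset.card_erase_of_mem (Finset.mem_univ _), Finset.card_univ, Fintype.card_fin]
  set n : ℕ := k - 1 with hndef
  have hk1 : (n : ℝ) + 1 = (k : ℝ) := by
    have : n + 1 = k := by omega
    exact_mod_cast congrArg (Nat.cast : ℕ → ℝ) this
  -- Step 1: expand the product
  have hprod : ∀ t : ℝ, (∏ i ∈ s, (1 - t * F (u i)))
      = ∑ A ∈ s.powerset, (∏ i ∈ A, (1 - F (u i))) * (t ^ A.card * (1 - t) ^ (n - A.card)) := by
    intro t
    have h1 : ∀ i ∈ s, (1 - t * F (u i)) = t * (1 - F (u i)) + (1 - t) := by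
      intro i _; ring
    rw [Finset.prod_congr rfl h1, Finset.prod_add]
    refine Finset.sum_congr rfl fun A hA => ?_
    rw [Finset.mem_powerset] at hA
    rw [Finset.prod_mul_distrib, Finset.prod_const, Finset.prod_const,
      Finset.card_sdiff_of_subset hA, hn]
    ring
  -- Step 2: integrate term by term
  have hint : ∀ A ∈ s.powerset, IntervalIntegrable
      (fun t : ℝ => (∏ i ∈ A, (1 - F (u i))) * (t ^ A.card * (1 - t) ^ (n - A.card)))
      MeasureTheory.volume 0 1 := by
    intro A _
    exact (by continuity : Continuous fun t : ℝ =>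
      (∏ i ∈ A, (1 - F (u i))) * (t ^ A.card * (1 - t) ^ (n - A.card))).intervalIntegrable _ _
  have hI : (∫ t in (0:ℝ)..1, ∏ i ∈ s, (1 - t * F (u i)))
      = ∑ A ∈ s.powerset, (∏ i ∈ A, (1 - F (u i))) *
          ((A.card.factorial * (n - A.card).factorial : ℝ) / (n + 1).factorial) := by
    rw [intervalIntegral.integral_congr (g := fun t => ∑ A ∈ s.powerset,
      (∏ i ∈ A, (1 - F (u i))) * (t ^ A.card * (1 - t) ^ (n - A.card)))
      (fun t _ => hprod t)]
    rw [intervalIntegral.integral_finset_sum hint]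
    refine Finset.sum_congr rfl fun A hA => ?_
    rw [Finset.mem_powerset] at hA
    have hcard : A.card ≤ n := by rw [← hn]; exact Finset.card_le_card hA
    rw [intervalIntegral.integral_const_mul, beta_nat (n - A.card) A.card,
      Nat.add_sub_cancel' hcard]
  -- Step 3: group by cardinality
  have hI2 : (∫ t in (0:ℝ)..1, ∏ i ∈ s, (1 - t * F (u i)))
      = ∑ j ∈ Finset.range (n + 1),
          (∑ A ∈ Finset.powersetCard j s, ∏ i ∈ A, (1 - F (u i))) *
            ((j.factorial * (n - j).factorial : ℝ) / (n + 1).factorial) := by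
    rw [hI, Finset.sum_powerset]
    rw [hn]
    refine Finset.sum_congr rfl fun j _ => ?_
    rw [Finset.sum_mul]
    refine Finset.sum_congr rfl fun A hA => ?_
    rw [Finset.mem_powersetCard] at hA
    rw [hA.2]
  -- Step 4: peel off the top term
  have htop : (∑ A ∈ Finset.powersetCard n s, ∏ i ∈ A, (1 - F (u i))) *
        ((n.factorial * (n - n).factorial : ℝ) / (n + 1).factorial)
      = (1 / (k : ℝ)) * ∏ i ∈ s, (1 - F (u i)) := by
    rw [← hn, Finset.powersetCard_self, Finset.sum_singleton, hn]
    rw [Nat.sub_self, Nat.factorial_zero, Nat.factorial_succ]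
    push_cast
    have hfn : (n.factorial : ℝ) ≠ 0 := by positivity
    rw [← hk1]
    field_simp
  rw [hI2, Finset.sum_range_succ, htop]
  have hrange : Finset.range (k - 1) = Finset.range n := by rw [hndef]
  rw [hrange, Finset.mul_sum]
  rw [add_sub_cancel_right]
  apply le_of_eq
  refine Finset.sum_congr rfl fun a ha => ?_
  rw [Finset.mem_range] at ha
  have han : a ≤ n := le_of_lt ha
  have hchoose : (n.choose a) * a.factorial * (n - a).factorial = n.factorial :=
    Nat.choose_mul_factorial_mul_factorial han
  have hc0 : (n.choose a : ℝ) ≠ 0 := by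
    have := Nat.choose_pos han
    positivity
  have hfa : (a.factorial : ℝ) ≠ 0 := by positivity
  have hfna : ((n - a).factorial : ℝ) ≠ 0 := by positivity
  have hkne : (k : ℝ) ≠ 0 := by
    have : (0:ℕ) < k := by omega
    positivity
  rw [Nat.factorial_succ n]
  have hchooseR : (n.choose a : ℝ) * a.factorial * (n - a).factorial = n.factorial := by
    exact_mod_cast congrArg (Nat.cast : ℕ → ℝ) hchoose
  have hfnn : (n.factorial : ℝ) ≠ 0 := by positivity
  push_cast
  rw [← hk1]
  field_simp
  rw [← hchooseR]
  ring
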